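/- arXiv:0911.4156 — 2 statements merged into one kernel-verified Lean document; each statement's English description precedes it below -/
import Mathlib

section
/- Suppose H = [[H₁₁, H₁₂],[H₁₂†, H₂₂]] Hermitian and L = [[L₁₁, L₁₂],[0, L₂₂]] are block matrices with respect to H = H₁ ⊕ H₂, with H₁₂ = -(i/2) L₁₁† L₁₂. If a full-rank density matrix ρ is stationary for the Lindblad equation ρ̇ = -i[H,ρ] + LρL† - ½{L†L,ρ}, then L₁₂ = 0 (and hence H₁₂ = 0), i.e., H and L are both block diagonal. -/
/-!
The Heisenberg-picture generator `X ↦ i[H,X] + L†XL - ½{L†L,X}` sends the projector `Π₂` onto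
the second block to `-K†K`, where `K` is the block `L₁₂` alone; the relation
`H₁₂ = -(i/2) L₁₁† L₁₂` is exactly what cancels the off-diagonal blocks. Hence
`d/dt tr(Π₂ ρ) = -tr(K†K ρ)`, which for a stationary `ρ` vanishes. Writing `ρ = y†y` with `y`
invertible, `tr(K†K ρ) = ‖K y†‖²`, so `K = 0`.
-/

open Matrix Complex ComplexOrder

lemma Matrix.PosDef.eq_zero_of_trace_conjTranspose_mul_self_mul_eq_zero {𝕜 m n : Type*}
    [RCLike 𝕜] [Fintype n] [DecidableEq n] [Fintype m] {ρ : Matrix n n 𝕜} (hρ : ρ.PosDef)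
    {K : Matrix m n 𝕜} (h : (Kᴴ * K * ρ).trace = 0) : K = 0 := by
  open scoped MatrixOrder in
  obtain ⟨y, hy, rfl⟩ := CStarAlgebra.isStrictlyPositive_iff_eq_star_mul_self.mp
    hρ.isStrictlyPositive
  have hKy : ((K * yᴴ)ᴴ * (K * yᴴ)).trace = 0 := by
    rw [conjTranspose_mul, conjTranspose_conjTranspose, trace_mul_cycle,
      trace_mul_comm (K * yᴴ * y) Kᴴ]
    simpa only [Matrix.mul_assoc, star_eq_conjTranspose] using h
  have hdet : IsUnit yᴴ.det := (isUnit_iff_isUnit_det _).mp hy.star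
  calc K = K * yᴴ * yᴴ⁻¹ := by rw [Matrix.mul_assoc, mul_nonsing_inv _ hdet, Matrix.mul_one]
    _ = 0 := by rw [trace_conjTranspose_mul_self_eq_zero_iff.mp hKy, Matrix.zero_mul]

noncomputable section

variable {n : Type*} [Fintype n]

def lindbladian (H L ρ : Matrix n n ℂ) : Matrix n n ℂ :=
  -I • (H * ρ - ρ * H) + L * ρ * Lᴴ - (1 / 2 : ℂ) • (Lᴴ * L * ρ + ρ * (Lᴴ * L))

def lindbladianDual (H L X : Matrix n n ℂ) : Matrix n n ℂ :=
  I • (H * X - X * H) + Lᴴ * X * L - (1 / 2 : ℂ) • (Lᴴ * L * X + X * (Lᴴ * L))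

theorem trace_mul_lindbladian (H L X ρ : Matrix n n ℂ) :
    (X * lindbladian H L ρ).trace = (lindbladianDual H L X * ρ).trace := by
  simp only [lindbladian, lindbladianDual, Matrix.mul_add, Matrix.add_mul, Matrix.mul_sub,
    Matrix.sub_mul, Matrix.mul_smul, Matrix.smul_mul, trace_add, trace_sub, trace_smul,
    smul_eq_mul]
  rw [trace_mul_cycle' X ρ H, trace_mul_cycle' X (L * ρ) Lᴴ, trace_mul_cycle' X ρ (Lᴴ * L)]
  simp only [Matrix.mul_assoc]
  ring

end

theorem lindbladianDual_fromBlocks_projection {m r : Type*} [Fintype m] [Fintype r]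
    [DecidableEq r] (H11 : Matrix m m ℂ) (H22 : Matrix r r ℂ) (L11 : Matrix m m ℂ)
    (L12 : Matrix m r ℂ) (L22 : Matrix r r ℂ) {H12 : Matrix m r ℂ}
    (hH12 : H12 = -(I / 2) • (L11ᴴ * L12)) :
    lindbladianDual (fromBlocks H11 H12 H12ᴴ H22) (fromBlocks L11 L12 0 L22) (fromBlocks 0 0 0 1)
      = -((fromBlocks 0 L12 0 0)ᴴ * fromBlocks 0 L12 0 0) := by
  subst hH12
  simp only [lindbladianDual, fromBlocks_conjTranspose, fromBlocks_multiply, conjTranspose_zero,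
    conjTranspose_smul, conjTranspose_mul, conjTranspose_conjTranspose, Matrix.zero_mul,
    Matrix.mul_zero, zero_add, add_zero, Matrix.one_mul, Matrix.mul_one, Matrix.mul_smul,
    sub_eq_add_neg, fromBlocks_smul, fromBlocks_neg, fromBlocks_add, fromBlocks_inj]
  have hI : I * (I / 2) = -(2⁻¹ : ℂ) := by rw [mul_div_assoc', I_mul_I]; norm_num
  have hI' : I * (-I / 2) = (2⁻¹ : ℂ) := by rw [mul_div_assoc', mul_neg, I_mul_I]; norm_num
  refine ⟨?_, ?_, ?_, ?_⟩ <;>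
    simp only [star_neg, star_div₀, RCLike.star_def, conj_I, star_ofNat, smul_zero, smul_neg,
      neg_smul, smul_add, smul_smul, hI, hI', neg_zero, add_zero, zero_add] <;>
    module

open Matrix Complex ComplexOrder in
theorem full_rank_stationary_forces_block_diagonal_general (m r : ℕ)
    (H11 : Matrix (Fin m) (Fin m) ℂ) (H12 : Matrix (Fin m) (Fin r) ℂ)
    (H22 : Matrix (Fin r) (Fin r) ℂ)
    (L11 : Matrix (Fin m) (Fin m) ℂ) (L12 : Matrix (Fin m) (Fin r) ℂ)
    (L22 : Matrix (Fin r) (Fin r) ℂ)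
    (hH12 : H12 = -(Complex.I / 2) • (L11ᴴ * L12))
    (ρ : Matrix (Fin m ⊕ Fin r) (Fin m ⊕ Fin r) ℂ)
    (hρ : ρ.PosDef)
    (hstat : -(Complex.I) • ((Matrix.fromBlocks H11 H12 H12ᴴ H22) * ρ -
        ρ * (Matrix.fromBlocks H11 H12 H12ᴴ H22)) +
      (Matrix.fromBlocks L11 L12 0 L22) * ρ * (Matrix.fromBlocks L11 L12 0 L22)ᴴ -
      (1 / 2 : ℂ) • ((Matrix.fromBlocks L11 L12 0 L22)ᴴ * (Matrix.fromBlocks L11 L12 0 L22) * ρ +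
        ρ * ((Matrix.fromBlocks L11 L12 0 L22)ᴴ * (Matrix.fromBlocks L11 L12 0 L22))) = 0) :
    L12 = 0 ∧ H12 = 0 := by
  have hρstationary :
      lindbladian (fromBlocks H11 H12 H12ᴴ H22) (fromBlocks L11 L12 0 L22) ρ = 0 := hstat
  have hK : (fromBlocks 0 L12 0 0 : Matrix (Fin m ⊕ Fin r) (Fin m ⊕ Fin r) ℂ) = 0 := by
    refine hρ.eq_zero_of_trace_conjTranspose_mul_self_mul_eq_zero ?_
    have h := trace_mul_lindbladian (fromBlocks H11 H12 H12ᴴ H22) (fromBlocks L11 L12 0 L22)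
      (fromBlocks 0 0 0 1) ρ
    rwa [hρstationary, Matrix.mul_zero, trace_zero,
      lindbladianDual_fromBlocks_projection H11 H22 L11 L12 L22 hH12, Matrix.neg_mul, trace_neg,
      eq_comm, neg_eq_zero] at h
  have hL12 : L12 = 0 := (fromBlocks_inj.mp (hK.trans fromBlocks_zero.symm)).2.1
  exact ⟨hL12, by rw [hH12, hL12, Matrix.mul_zero, smul_zero]⟩

open Matrix Complex ComplexOrder in
/-- if `L` is block upper triangular, `H` Hermitian with
`H₁₂ = −(i/2) L₁₁† L₁₂`, and a full-rank density matrix is stationary for the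
associated Lindblad equation, then `L₁₂ = 0` (hence also `H₁₂ = 0`). -/
theorem full_rank_stationary_forces_block_diagonal (m r : ℕ) (hm : 0 < m) (hr : 0 < r)
    (H11 : Matrix (Fin m) (Fin m) ℂ) (H12 : Matrix (Fin m) (Fin r) ℂ)
    (H22 : Matrix (Fin r) (Fin r) ℂ)
    (L11 : Matrix (Fin m) (Fin m) ℂ) (L12 : Matrix (Fin m) (Fin r) ℂ)
    (L22 : Matrix (Fin r) (Fin r) ℂ)
    (hH : (Matrix.fromBlocks H11 H12 H12ᴴ H22).IsHermitian)
    (hH12 : H12 = -(Complex.I / 2) • (L11ᴴ * L12))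
    (ρ : Matrix (Fin m ⊕ Fin r) (Fin m ⊕ Fin r) ℂ)
    (hρ : ρ.PosDef) (hρtr : ρ.trace = 1)
    (hstat : -(Complex.I) • ((Matrix.fromBlocks H11 H12 H12ᴴ H22) * ρ -
        ρ * (Matrix.fromBlocks H11 H12 H12ᴴ H22)) +
      (Matrix.fromBlocks L11 L12 0 L22) * ρ * (Matrix.fromBlocks L11 L12 0 L22)ᴴ -
      (1 / 2 : ℂ) • ((Matrix.fromBlocks L11 L12 0 L22)ᴴ * (Matrix.fromBlocks L11 L12 0 L22) * ρ +
        ρ * ((Matrix.fromBlocks L11 L12 0 L22)ᴴ * (Matrix.fromBlocks L11 L12 0 L22))) = 0) :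
    L12 = 0 ∧ H12 = 0 :=
  full_rank_stationary_forces_block_diagonal_general m r H11 H12 H22 L11 L12 L22 hH12 ρ hρ hstat
end

section
/- Let {f_n} be a monic polynomial sequence over ℝ with f₀ = 1 satisfying the three-term recurrence f_{n+1}(x) = (x − α_{n+1}) f_n(x) − β_n² f_{n−1}(x) with β_n ≠ 0 for all n. Then for each n ≥ 1, the polynomial f_n has n distinct real roots, and the roots of f_n and f_{n+1} strictly interlace. -/
/-!
Induct on `n`, carrying the roots `r` of `f n`, the roots `s` of `f (n + 1)` and their
interlacing. At a root `sᵢ` of `f (n + 1)` the recurrence reads `f (n + 2) (sᵢ) = -β² f n (sᵢ)`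
with `β² > 0`. Exactly one root of `f n` separates consecutive `sᵢ` and all of them lie in
`(s₀, sₙ)`, so `f n` alternates in sign along `s` and is positive at `sₙ`. Hence `f (n + 2)`
alternates in sign along `s`, is negative at `sₙ`, and at `s₀` has the sign opposite to its sign
at `-∞`; the intermediate value theorem gives a root of `f (n + 2)` in each of the `n + 2` gaps
`(-∞, s₀), (s₀, s₁), …, (sₙ, ∞)`.
-/

open Polynomial Filter

theorem Fin.forall_rel_cons_snoc {α : Type*} {R : α → α → Prop} {m : ℕ} {a b : α}
    {s : Fin (m + 1) → α} (ha : R a (s 0)) (hs : ∀ i : Fin m, R (s i.castSucc) (s i.succ))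
    (hb : R (s (Fin.last m)) b) (j : Fin (m + 2)) :
    R ((Fin.cons a (Fin.snoc s b) : Fin (m + 3) → α) j.castSucc)
      ((Fin.cons a (Fin.snoc s b) : Fin (m + 3) → α) j.succ) := by
  induction j using Fin.cases with
  | zero => simpa using ha
  | succ j =>
    rw [← Fin.succ_castSucc, Fin.cons_succ, Fin.cons_succ]
    induction j using Fin.lastCases with
    | last => simpa using hb
    | cast i =>
      rw [Fin.snoc_castSucc, Fin.succ_castSucc, Fin.snoc_castSucc]
      exact hs i

theorem exists_mem_Ioo_eq_zero_of_mul_neg {f : ℝ → ℝ} (hf : Continuous f) {a b : ℝ}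
    (hab : a ≤ b) (h : f a * f b < 0) : ∃ c ∈ Set.Ioo a b, f c = 0 := by
  rcases mul_neg_iff.1 h with ⟨ha, hb⟩ | ⟨ha, hb⟩
  · exact intermediate_value_Ioo' hab hf.continuousOn ⟨hb, ha⟩
  · exact intermediate_value_Ioo hab hf.continuousOn ⟨ha, hb⟩

theorem exists_zeros_between_of_mul_neg {f : ℝ → ℝ} (hf : Continuous f) {k : ℕ}
    {u : Fin (k + 1) → ℝ} (hu : StrictMono u)
    (hsign : ∀ j : Fin k, f (u j.castSucc) * f (u j.succ) < 0) :
    ∃ t : Fin k → ℝ, StrictMono t ∧ (∀ j, f (t j) = 0) ∧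
      ∀ j, u j.castSucc < t j ∧ t j < u j.succ := by
  choose t ht hft using fun j ↦
    exists_mem_Ioo_eq_zero_of_mul_neg hf (hu Fin.castSucc_lt_succ).le (hsign j)
  refine ⟨t, fun i j hij ↦ ?_, hft, ht⟩
  calc t i < u i.succ := (ht i).2
    _ ≤ u j.castSucc := hu.monotone (Fin.succ_le_castSucc_iff.2 hij)
    _ < t j := (ht j).1

theorem Polynomial.eq_prod_X_sub_C_of_injective {R ι : Type*} [CommRing R] [IsDomain R]
    [Fintype ι] {p : R[X]} (hp : p.Monic) {r : ι → R} (hr : Function.Injective r)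
    (hroot : ∀ i, p.IsRoot (r i)) (hdeg : p.natDegree ≤ Fintype.card ι) :
    p = ∏ i, (X - C (r i)) := by
  set s := Finset.univ.val.map r
  have hle : s ≤ p.roots :=
    (Multiset.le_iff_subset (Finset.univ.nodup.map hr)).2 fun a ha ↦ by
      obtain ⟨i, -, rfl⟩ := Multiset.mem_map.1 ha
      exact (mem_roots hp.ne_zero).2 (hroot i)
  have hmonic : (s.map fun a ↦ X - C a).prod.Monic :=
    monic_multiset_prod_of_monic _ _ fun a _ ↦ monic_X_sub_C a
  have hdeg' : p.natDegree ≤ (s.map fun a ↦ X - C a).prod.natDegree := by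
    rw [natDegree_multiset_prod_X_sub_C_eq_card]
    simpa [s] using hdeg
  rw [eq_of_monic_of_dvd_of_natDegree_le hmonic hp
    ((Multiset.prod_X_sub_C_dvd_iff_le_roots hp.ne_zero _).2 hle) hdeg',
    Finset.prod_eq_multiset_prod, Multiset.map_map]
  rfl

theorem Polynomial.card_roots_toFinset_eq_of_injective {R ι : Type*} [CommRing R] [IsDomain R]
    [DecidableEq R] [Fintype ι] {p : R[X]} (hp : p ≠ 0) {r : ι → R}
    (hr : Function.Injective r)
    (hroot : ∀ i, p.IsRoot (r i)) (hdeg : p.natDegree ≤ Fintype.card ι) :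
    p.roots.toFinset.card = Fintype.card ι := by
  refine le_antisymm ((Multiset.toFinset_card_le _).trans (p.card_roots'.trans hdeg)) ?_
  calc Fintype.card ι = (Finset.univ.image r).card := (Finset.card_image_of_injective _ hr).symm
    _ ≤ p.roots.toFinset.card := Finset.card_le_card fun a ha ↦ by
      obtain ⟨i, -, rfl⟩ := Finset.mem_image.1 ha
      simpa [mem_roots hp] using hroot i

theorem prod_sub_mul_prod_sub_neg {ι : Type*} [Fintype ι] {r : ι → ℝ} {x y : ℝ} (i : ι)
    (hxi : x < r i) (hiy : r i < y) (hother : ∀ j ≠ i, r j < x ∨ y < r j) :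
    (∏ j, (x - r j)) * ∏ j, (y - r j) < 0 := by
  classical
  rw [← Finset.prod_mul_distrib, ← Finset.mul_prod_erase _ _ (Finset.mem_univ i)]
  refine mul_neg_of_neg_of_pos (mul_neg_of_neg_of_pos (by linarith) (by linarith))
    (Finset.prod_pos fun j hj ↦ ?_)
  rcases hother j (Finset.ne_of_mem_erase hj) with h | h
  · exact mul_pos (by linarith) (by linarith)
  · exact mul_pos_of_neg_of_neg (by linarith) (by linarith)

theorem Polynomial.Monic.eventually_eval_pos_atTop {p : ℝ[X]} (hp : p.Monic)
    (hdeg : 0 < p.degree) : ∀ᶠ x in atTop, 0 < p.eval x :=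
  (p.tendsto_atTop_of_leadingCoeff_nonneg hdeg (by simp [hp.leadingCoeff])).eventually_gt_atTop 0

theorem Polynomial.Monic.eventually_neg_one_pow_mul_eval_pos_atBot {p : ℝ[X]} (hp : p.Monic)
    (hdeg : 0 < p.degree) : ∀ᶠ x in atBot, 0 < (-1) ^ p.natDegree * p.eval x := by
  have hdeg' : 0 < ((-1) ^ p.natDegree * p.comp (-X)).degree := by simpa [degree_mul] using hdeg
  filter_upwards [tendsto_neg_atBot_atTop.eventually
    (hp.neg_one_pow_natDegree_mul_comp_neg_X.eventually_eval_pos_atTop hdeg')] with x hx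
  simpa [eval_comp] using hx

theorem Polynomial.Monic.exists_roots_interlacing_of_sign_changes {p : ℝ[X]} (hp : p.Monic)
    {m : ℕ} {s : Fin (m + 1) → ℝ} (hs : StrictMono s)
    (hleft : (-1) ^ p.natDegree * p.eval (s 0) < 0)
    (hmid : ∀ i : Fin m, p.eval (s i.castSucc) * p.eval (s i.succ) < 0)
    (hright : p.eval (s (Fin.last m)) < 0) :
    ∃ t : Fin (m + 2) → ℝ, StrictMono t ∧ (∀ j, p.eval (t j) = 0) ∧
      ∀ i : Fin (m + 1), t i.castSucc < s i ∧ s i < t i.succ := by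
  have hdeg : 0 < p.degree := natDegree_pos_iff_degree_pos.1 <|
    Nat.pos_of_ne_zero fun h ↦ by norm_num [hp.natDegree_eq_zero.1 h] at hright
  obtain ⟨a, hpa, ha⟩ := ((hp.eventually_neg_one_pow_mul_eval_pos_atBot hdeg).and
    (eventually_lt_atBot (s 0))).exists
  obtain ⟨b, hpb, hb⟩ := ((hp.eventually_eval_pos_atTop hdeg).and
    (eventually_gt_atTop (s (Fin.last m)))).exists
  have hpas : p.eval a * p.eval (s 0) < 0 := by
    have hsq : ((-1 : ℝ) ^ p.natDegree) * (-1) ^ p.natDegree = 1 := by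
      rw [← mul_pow]; norm_num
    calc p.eval a * p.eval (s 0)
        = ((-1) ^ p.natDegree * p.eval a) * ((-1) ^ p.natDegree * p.eval (s 0)) := by
          linear_combination (p.eval a * p.eval (s 0)) * hsq.symm
      _ < 0 := mul_neg_of_pos_of_neg hpa hleft
  set u : Fin (m + 3) → ℝ := Fin.cons a (Fin.snoc s b)
  have hu : StrictMono u := Fin.strictMono_iff_lt_succ.2 <|
    Fin.forall_rel_cons_snoc ha (fun _ ↦ hs Fin.castSucc_lt_succ) hb
  obtain ⟨t, ht, hpt, htu⟩ := exists_zeros_between_of_mul_neg p.continuous hu <|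
    Fin.forall_rel_cons_snoc (R := fun x y ↦ p.eval x * p.eval y < 0) hpas hmid
      (mul_neg_of_neg_of_pos hright hpb)
  refine ⟨t, ht, hpt, fun i ↦ ⟨?_, ?_⟩⟩
  · simpa [u] using (htu i.castSucc).2
  · simpa [u, ← Fin.succ_castSucc] using (htu i.succ).1

theorem monic_natDegree_of_three_term_recurrence {R : Type*} [CommRing R] [Nontrivial R]
    (α β : ℕ → R) {f : ℕ → R[X]} (hf0 : f 0 = 1) (hf1 : f 1 = X - C (α 1))
    (hrec : ∀ n, 1 ≤ n →
      f (n + 1) = (X - C (α (n + 1))) * f n - C ((β n) ^ 2) * f (n - 1))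
    (n : ℕ) : (f n).Monic ∧ (f n).natDegree = n := by
  induction n using Nat.twoStepInduction with
  | zero => simp [hf0]
  | one => rw [hf1]; exact ⟨monic_X_sub_C _, natDegree_X_sub_C _⟩
  | more n ih0 ih1 =>
    have hlead_monic := (monic_X_sub_C (α (n + 2))).mul ih1.1
    have hlead_deg : ((X - C (α (n + 2))) * f (n + 1)).natDegree = n + 2 := by
      rw [(monic_X_sub_C _).natDegree_mul ih1.1, natDegree_X_sub_C, ih1.2, add_comm]
    have hlow : (C (β (n + 1) ^ 2) * f n).natDegree
        < ((X - C (α (n + 2))) * f (n + 1)).natDegree := by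
      rw [hlead_deg]
      exact natDegree_C_mul_le _ _ |>.trans_lt (by omega)
    rw [hrec (n + 1) le_add_self, Nat.add_sub_cancel]
    refine ⟨hlead_monic.sub_of_left (degree_lt_degree hlow), ?_⟩
    rw [natDegree_sub_eq_left_of_natDegree_lt hlow, hlead_deg]

theorem exists_interlacing_roots_of_eval_eq_neg_mul {p q : ℝ[X]} {n : ℕ} (hp : p.Monic)
    (hpdeg : p.natDegree = n) (hq : q.Monic) (hqdeg : q.natDegree = n + 2)
    {r : Fin n → ℝ} {s : Fin (n + 1) → ℝ} (hr : StrictMono r) (hs : StrictMono s)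
    (hpr : ∀ i, p.eval (r i) = 0) (hint : ∀ i : Fin n, s i.castSucc < r i ∧ r i < s i.succ)
    {c : ℝ} (hc : 0 < c) (hqs : ∀ i, q.eval (s i) = -c * p.eval (s i)) :
    ∃ t : Fin (n + 2) → ℝ, StrictMono t ∧ (∀ j, q.eval (t j) = 0) ∧
      ∀ i : Fin (n + 1), t i.castSucc < s i ∧ s i < t i.succ := by
  have hprod (x : ℝ) : p.eval x = ∏ j, (x - r j) := by
    rw [eq_prod_X_sub_C_of_injective hp hr.injective hpr (by simp [hpdeg]), eval_prod]
    simp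
  refine hq.exists_roots_interlacing_of_sign_changes hs ?_ (fun i ↦ ?_) ?_
  · have hpos : 0 < ∏ j, (r j - s 0) := Finset.prod_pos fun j _ ↦
      sub_pos.2 ((hs.monotone (Fin.zero_le _)).trans_lt (hint j).1)
    have hflip : ∏ j, (r j - s 0) = (-1) ^ n * ∏ j, (s 0 - r j) := by
      rw [← Finset.prod_congr rfl fun j _ ↦ neg_sub (s 0) (r j), Finset.prod_neg]
      simp
    rw [hqdeg, hqs, hprod]
    calc (-1) ^ (n + 2) * (-c * ∏ j, (s 0 - r j)) = -(c * ∏ j, (r j - s 0)) := by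
          rw [hflip]; ring
      _ < 0 := neg_neg_of_pos (mul_pos hc hpos)
  · rw [hqs, hqs, hprod, hprod]
    have hsep : ∀ j ≠ i, r j < s i.castSucc ∨ s i.succ < r j := fun j hj ↦
      (lt_or_gt_of_ne hj).imp
        (fun h ↦ (hint j).2.trans_le (hs.monotone (Fin.succ_le_castSucc_iff.2 h)))
        (fun h ↦ (hs.monotone (Fin.succ_le_castSucc_iff.2 h)).trans_lt (hint j).1)
    calc (-c * ∏ j, (s i.castSucc - r j)) * (-c * ∏ j, (s i.succ - r j))
        = c ^ 2 * ((∏ j, (s i.castSucc - r j)) * ∏ j, (s i.succ - r j)) := by ring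
      _ < 0 := mul_neg_of_pos_of_neg (by positivity)
          (prod_sub_mul_prod_sub_neg i (hint i).1 (hint i).2 hsep)
  · rw [hqs, hprod, neg_mul]
    exact neg_neg_of_pos <| mul_pos hc <| Finset.prod_pos fun j _ ↦
      sub_pos.2 ((hint j).2.trans_le (hs.monotone (Fin.le_last _)))

open Polynomial in
/-- polynomials satisfying the Jacobi three-term recurrence with `β_n ≠ 0`
have, for each `n ≥ 1`, `n` distinct real roots, and the roots of `f_n` and `f_{n+1}`
strictly interlace. -/
theorem three_term_recurrence_real_interlacing_roots
    (α β : ℕ → ℝ) (hβ : ∀ n, β n ≠ 0)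
    (f : ℕ → Polynomial ℝ)
    (hf0 : f 0 = 1)
    (hf1 : f 1 = X - C (α 1))
    (hrec : ∀ n, 1 ≤ n →
      f (n + 1) = (X - C (α (n + 1))) * f n - C ((β n) ^ 2) * f (n - 1)) :
    ∀ n, 1 ≤ n →
      ((f n).roots.toFinset.card = n) ∧
      ∃ (r : Fin n → ℝ) (s : Fin (n + 1) → ℝ), StrictMono r ∧ StrictMono s ∧
        (∀ i, (f n).eval (r i) = 0) ∧ (∀ i, (f (n + 1)).eval (s i) = 0) ∧
        ∀ i : Fin n, s i.castSucc < r i ∧ r i < s i.succ := by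
  have hf := monic_natDegree_of_three_term_recurrence α β hf0 hf1 hrec
  have hinterlace (n : ℕ) : ∃ (r : Fin n → ℝ) (s : Fin (n + 1) → ℝ), StrictMono r ∧
      StrictMono s ∧ (∀ i, (f n).eval (r i) = 0) ∧ (∀ i, (f (n + 1)).eval (s i) = 0) ∧
      ∀ i : Fin n, s i.castSucc < r i ∧ r i < s i.succ := by
    induction n with
    | zero =>
      exact ⟨Fin.elim0, fun _ ↦ α 1, Subsingleton.strictMono _,
        Fin.strictMono_iff_lt_succ.2 nofun, nofun, by simp [hf1], nofun⟩
    | succ n ih =>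
      obtain ⟨r, s, hr, hs, hfr, hfs, hint⟩ := ih
      have hstep (i : Fin (n + 1)) :
          (f (n + 2)).eval (s i) = -β (n + 1) ^ 2 * (f n).eval (s i) := by
        rw [hrec (n + 1) le_add_self]
        simp [hfs i]
      obtain ⟨t, ht, hft, hst⟩ := exists_interlacing_roots_of_eval_eq_neg_mul (hf n).1 (hf n).2
        (hf (n + 2)).1 (hf (n + 2)).2 hr hs hfr hint (pow_two_pos_of_ne_zero (hβ (n + 1))) hstep
      exact ⟨s, t, hs, ht, hfs, hft, hst⟩
  intro n _
  obtain ⟨r, s, hr, hs, hfr, hfs, hint⟩ := hinterlace n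
  have hcard := card_roots_toFinset_eq_of_injective (hf n).1.ne_zero hr.injective hfr
    (by simp [(hf n).2])
  exact ⟨by simpa using hcard, r, s, hr, hs, hfr, hfs, hint⟩
end
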